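/- The relation f(xq^{2n})(1−x)(1−xq^{2n}) = f(x)(1−xq²)(1−xq^{2n−2}) together with f₀ = 1 uniquely determines the coefficients of the formal power series f(x) = Σ_{k≥0} f_k x^k, and these coefficients satisfy the recurrence f_k = −((1−q²)(1−q^{2n−2})/(1−q^{2n})) · Σ_{i=1}^{k} ((1−q^{2ni})/(1−q^{2nk})) f_{k−i} for all k ≥ 1. -/

import Mathlib

/-!
Put `a = q^{2n}`, `b = q²`, `c = q^{2n-2}`, so that `bc = a`. Subtracting `F(x)(1-x)(1-ax)` from
both sides turns the equation into `(F(x) - F(ax))(1-x)(1-ax) = -(1-b)(1-c) x F(x)`. Since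
`Σ_{i≥1} (1-a^i) x^i = (1-a)x / ((1-x)(1-ax))`, cancelling `(1-x)(1-ax)` leaves
`(1-a)(F(x) - F(ax)) = -(1-b)(1-c) F(x) Σ_{i≥1} (1-a^i) x^i`, whose `x^k`-coefficient is the
recurrence. As `1 - a^k ≠ 0`, the recurrence determines `f_k` from `f_0, …, f_{k-1}`, which
gives existence and uniqueness.
-/

open PowerSeries

section Recurrence

variable {R : Type*} [Semiring R]

def recurrenceSeq (w : ℕ → ℕ → R) : ℕ → R
  | 0 => 1
  | k + 1 => ∑ i ∈ (Finset.Icc 1 (k + 1)).attach, w (k + 1) i * recurrenceSeq w (k + 1 - i)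
decreasing_by
  have := Finset.mem_Icc.mp i.2
  omega

theorem recurrenceSeq_zero (w : ℕ → ℕ → R) : recurrenceSeq w 0 = 1 := by
  rw [recurrenceSeq]

theorem recurrenceSeq_of_one_le (w : ℕ → ℕ → R) {k : ℕ} (hk : 1 ≤ k) :
    recurrenceSeq w k = ∑ i ∈ Finset.Icc 1 k, w k i * recurrenceSeq w (k - i) := by
  obtain ⟨k, rfl⟩ := Nat.exists_eq_add_of_le' hk
  rw [recurrenceSeq,
    Finset.sum_attach (Finset.Icc 1 (k + 1)) fun i => w (k + 1) i * recurrenceSeq w (k + 1 - i)]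

theorem eq_recurrenceSeq {w : ℕ → ℕ → R} {f : ℕ → R} (h0 : f 0 = 1)
    (hrec : ∀ k, 1 ≤ k → f k = ∑ i ∈ Finset.Icc 1 k, w k i * f (k - i)) :
    f = recurrenceSeq w := by
  funext k
  induction k using Nat.strong_induction_on with
  | _ k ih =>
    rcases Nat.eq_zero_or_pos k with rfl | hk
    · rw [h0, recurrenceSeq_zero]
    · rw [hrec k hk, recurrenceSeq_of_one_le w hk]
      refine Finset.sum_congr rfl fun i hi => ?_
      rw [ih (k - i) (by have := (Finset.mem_Icc.mp hi).1; omega)]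

theorem existsUnique_constantCoeff_eq_one_and_coeff_recurrence (w : ℕ → ℕ → R) :
    ∃! F : R⟦X⟧, constantCoeff F = 1 ∧
      ∀ k, 1 ≤ k → coeff k F = ∑ i ∈ Finset.Icc 1 k, w k i * coeff (k - i) F := by
  refine ⟨mk (recurrenceSeq w), ⟨?_, fun k hk => ?_⟩, fun F ⟨h0, hrec⟩ => ?_⟩
  · rw [constantCoeff_mk, recurrenceSeq_zero]
  · simp only [coeff_mk, recurrenceSeq_of_one_le w hk]
  · ext k
    rw [coeff_mk, ← eq_recurrenceSeq (f := fun k => coeff k F) (by simpa using h0) hrec]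

theorem coeff_mk_mul_of_zero {g : ℕ → R} (hg : g 0 = 0) (F : R⟦X⟧) (k : ℕ) :
    coeff k (mk g * F) = ∑ i ∈ Finset.Icc 1 k, g i * coeff (k - i) F := by
  rw [coeff_mul,
    Finset.Nat.sum_antidiagonal_eq_sum_range_succ (fun i j => coeff i (mk g) * coeff j F),
    Finset.sum_range_eq_add_Ico _ k.succ_pos, Nat.succ_eq_add_one, Finset.Ico_add_one_right_eq_Icc]
  simp [coeff_mk, hg]

end Recurrence

section QDifferenceEquation

variable {R : Type*} [CommRing R]

theorem mk_one_sub_pow_mul_eq_C_mul_X (a : R) :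
    mk (fun i => 1 - a ^ i) * ((1 - X) * (1 - C a * X)) = C (1 - a) * X := by
  have geom : mk (fun i => a ^ i) * (1 - C a * X) = 1 := by
    simpa [rescale_mk] using congrArg (rescale a) (mk_one_mul_one_sub_eq_one (S := R))
  have hsplit : mk (fun i => 1 - a ^ i) = mk 1 - mk (fun i => a ^ i) := by ext; simp
  rw [hsplit, map_sub, map_one]
  linear_combination (1 - C a * X) * mk_one_mul_one_sub_eq_one (S := R) - (1 - X) * geom

theorem qDifferenceEq_iff_sub_rescale_mul {a b c : R} (hbc : b * c = a) (F : R⟦X⟧) :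
    rescale a F * (1 - X) * (1 - C a * X) = F * (1 - C b * X) * (1 - C c * X) ↔
      (F - rescale a F) * ((1 - X) * (1 - C a * X)) = -(C ((1 - b) * (1 - c)) * X * F) := by
  have hC : C b * C c = C a := by rw [← map_mul, hbc]
  simp only [map_mul, map_sub, map_one]
  constructor <;> intro h <;> linear_combination (-1) * h + F * (X - X ^ 2) * hC

variable [IsDomain R] in
theorem qDifferenceEq_iff_C_mul_sub_rescale {a b c : R} (hbc : b * c = a) (ha : a ≠ 1)
    (F : R⟦X⟧) :
    rescale a F * (1 - X) * (1 - C a * X) = F * (1 - C b * X) * (1 - C c * X) ↔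
      C (1 - a) * (F - rescale a F) =
        -(C ((1 - b) * (1 - c)) * (mk (fun i => 1 - a ^ i) * F)) := by
  have hP : ((1 - X) * (1 - C a * X) : R⟦X⟧) ≠ 0 := by
    have h1 : constantCoeff ((1 - X) * (1 - C a * X) : R⟦X⟧) = 1 := by simp
    exact fun h => one_ne_zero (h1.symm.trans (by rw [h, map_zero]))
  have hC : C (1 - a) ≠ 0 := by
    rw [Ne, map_eq_zero_iff _ C_injective, sub_eq_zero]
    exact ha.symm
  rw [qDifferenceEq_iff_sub_rescale_mul hbc]
  constructor <;> intro h
  · apply mul_right_cancel₀ hP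
    linear_combination
      C (1 - a) * h + C ((1 - b) * (1 - c)) * F * mk_one_sub_pow_mul_eq_C_mul_X a
  · apply mul_left_cancel₀ hC
    linear_combination
      (1 - X) * (1 - C a * X) * h - C ((1 - b) * (1 - c)) * F * mk_one_sub_pow_mul_eq_C_mul_X a

end QDifferenceEquation

theorem qDifferenceEq_iff_coeff_recurrence {K : Type*} [Field K] {a b c : K} (hbc : b * c = a)
    (ha : ∀ k, 1 ≤ k → 1 - a ^ k ≠ 0) (F : K⟦X⟧) :
    rescale a F * (1 - X) * (1 - C a * X) = F * (1 - C b * X) * (1 - C c * X) ↔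
      ∀ k, 1 ≤ k → coeff k F = -((1 - b) * (1 - c) / (1 - a)) *
        ∑ i ∈ Finset.Icc 1 k, ((1 - a ^ i) / (1 - a ^ k)) * coeff (k - i) F := by
  have ha1 : 1 - a ≠ 0 := by simpa using ha 1 le_rfl
  rw [qDifferenceEq_iff_C_mul_sub_rescale hbc (sub_ne_zero.mp ha1).symm, PowerSeries.ext_iff]
  refine forall_congr' fun k => ?_
  rw [coeff_C_mul, map_sub, coeff_rescale, map_neg, coeff_C_mul,
    coeff_mk_mul_of_zero (by simp)]
  rcases Nat.eq_zero_or_pos k with rfl | (hk : 1 ≤ k)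
  · simp
  · have hak := ha k hk
    rw [imp_iff_right hk]
    simp only [div_mul_eq_mul_div, ← Finset.sum_div]
    field_simp

theorem f_series_unique_and_recurrence_general (n : ℕ) (hn : 1 ≤ n) (q : ℂ)
    (hru : ∀ m : ℕ, 0 < m → q ^ m ≠ 1) :
    (∃! F : PowerSeries ℂ,
        constantCoeff F = 1 ∧
        rescale (q ^ (2 * n)) F * (1 - X) * (1 - C (q ^ (2 * n)) * X) =
          F * (1 - C (q ^ 2) * X) * (1 - C (q ^ (2 * n - 2)) * X)) ∧
    (∀ F : PowerSeries ℂ,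
        constantCoeff F = 1 →
        rescale (q ^ (2 * n)) F * (1 - X) * (1 - C (q ^ (2 * n)) * X) =
          F * (1 - C (q ^ 2) * X) * (1 - C (q ^ (2 * n - 2)) * X) →
        ∀ k : ℕ, 1 ≤ k →
          coeff k F =
            -((1 - q ^ 2) * (1 - q ^ (2 * n - 2)) / (1 - q ^ (2 * n))) *
              ∑ i ∈ Finset.Icc 1 k,
                ((1 - q ^ (2 * n * i)) / (1 - q ^ (2 * n * k))) * coeff (k - i) F) := by
  have hbc : q ^ 2 * q ^ (2 * n - 2) = q ^ (2 * n) := by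
    rw [← pow_add]
    congr 1
    omega
  have ha : ∀ k, 1 ≤ k → 1 - (q ^ (2 * n)) ^ k ≠ 0 := fun k hk => by
    rw [← pow_mul]
    exact sub_ne_zero.mpr (hru _ (by positivity)).symm
  have hchar := qDifferenceEq_iff_coeff_recurrence hbc ha
  simp only [← pow_mul] at hchar
  refine ⟨?_, fun F _ hF => (hchar F).mp hF⟩
  simp only [hchar, Finset.mul_sum, ← mul_assoc]
  exact existsUnique_constantCoeff_eq_one_and_coeff_recurrence _

/-- The relation `f(xq^{2n})(1−x)(1−xq^{2n}) = f(x)(1−xq²)(1−xq^{2n−2})` together with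
`f₀ = 1` uniquely determines the coefficients of the formal power series
`f(x) = Σ_{k≥0} f_k x^k`, and these coefficients satisfy the recurrence
`f_k = −((1−q²)(1−q^{2n−2})/(1−q^{2n})) Σ_{i=1}^{k} ((1−q^{2ni})/(1−q^{2nk})) f_{k−i}`
for all `k ≥ 1`. -/
theorem f_series_unique_and_recurrence (n : ℕ) (hn : 1 ≤ n) (q : ℂ) (hq : q ≠ 0)
    (hru : ∀ m : ℕ, 0 < m → q ^ m ≠ 1) :
    (∃! F : PowerSeries ℂ,
        constantCoeff F = 1 ∧
        rescale (q ^ (2 * n)) F * (1 - X) * (1 - C (q ^ (2 * n)) * X) =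
          F * (1 - C (q ^ 2) * X) * (1 - C (q ^ (2 * n - 2)) * X)) ∧
    (∀ F : PowerSeries ℂ,
        constantCoeff F = 1 →
        rescale (q ^ (2 * n)) F * (1 - X) * (1 - C (q ^ (2 * n)) * X) =
          F * (1 - C (q ^ 2) * X) * (1 - C (q ^ (2 * n - 2)) * X) →
        ∀ k : ℕ, 1 ≤ k →
          coeff k F =
            -((1 - q ^ 2) * (1 - q ^ (2 * n - 2)) / (1 - q ^ (2 * n))) *
              ∑ i ∈ Finset.Icc 1 k,
                ((1 - q ^ (2 * n * i)) / (1 - q ^ (2 * n * k))) * coeff (k - i) F) :=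
  f_series_unique_and_recurrence_general n hn q hru
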